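/- If a probability measure F on [0,∞) belongs to 𝓛_{Δ_d} for some d > 0, then F is heavy-tailed: ∫_0^∞ e^{ε y} F(dy) = ∞ for every constant ε > 0. -/

import Mathlib

open MeasureTheory Filter Set

noncomputable section

/-- A probability density supported on `[0, ∞)`. -/
def IsDensity (f : ℝ → ℝ) : Prop :=
  Measurable f ∧ (∀ x < (0:ℝ), f x = 0) ∧ (∀ x : ℝ, 0 ≤ f x) ∧
    ∫ y in Set.Ioi (0:ℝ), f y = 1

/-- The long-tailed density class `𝓛₀`. -/
def LongTailedDensity (f : ℝ → ℝ) : Prop :=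
  (∀ᶠ x in atTop, 0 < f x) ∧
  ∀ t : ℝ, Tendsto (fun x => f (x + t) / f x) atTop (nhds 1)

/-- The subexponential density class `𝓢₀`. -/
def SubexpDensity (f : ℝ → ℝ) : Prop :=
  LongTailedDensity f ∧
  Tendsto (fun x => (∫ y in (0:ℝ)..x, f (x - y) * f y) / f x) atTop (nhds 2)

/-- The local mass `F((x, x+d])` of a measure, as a real number. -/
def locMass (F : Measure ℝ) (d x : ℝ) : ℝ := (F (Set.Ioc x (x + d))).toReal

/-- `F ∈ 𝓛_{Δ_d}`. -/
def MemLdelta (F : Measure ℝ) (d : ℝ) : Prop :=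
  (∀ᶠ x in atTop, 0 < locMass F d x) ∧
  ∀ t > (0:ℝ), ∀ ε > (0:ℝ), ∀ᶠ x in atTop, ∀ s : ℝ, |s| ≤ t →
    |locMass F d (x + s) / locMass F d x - 1| ≤ ε

/-- Convolution of two measures on `ℝ`: the law of the sum of two
independent random variables with laws `F` and `G`. -/
def mconv (F G : Measure ℝ) : Measure ℝ :=
  Measure.map (fun p : ℝ × ℝ => p.1 + p.2) (F.prod G)

/-- `F ∈ 𝓢_{Δ_d}`. -/
def MemSdelta (F : Measure ℝ) (d : ℝ) : Prop :=
  MemLdelta F d ∧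
  Tendsto (fun x => locMass (mconv F F) d x / locMass F d x) atTop (nhds 2)

/-- The probability measure on `[0,∞)` with density `f`. -/
def densMeasure (f : ℝ → ℝ) : Measure ℝ :=
  volume.withDensity (fun y => ENNReal.ofReal (f y))

/-! Along the lattice `X + n d` the local masses can decay no faster than geometrically with ratio
as close to `1` as we like (take the shift `s = d` in the definition of `𝓛_{Δ_d}`), say with ratio
`e^{-εd/2}`. The mass on `(X + n d, X + (n + 1) d]` then contributes at least
`e^{ε (X + n d)} e^{-n ε d / 2} F((X, X + d])`, which tends to infinity with `n`. -/

open Real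

theorem ENNReal.eq_top_of_tendsto_atTop_of_forall_ofReal_le {ι : Type*} {l : Filter ι} [l.NeBot]
    {u : ι → ℝ} {I : ENNReal} (hu : Tendsto u l atTop) (hI : ∀ i, ENNReal.ofReal (u i) ≤ I) :
    I = ⊤ := by
  by_contra hne
  obtain ⟨i, hi⟩ := (hu.eventually_gt_atTop I.toReal).exists
  exact hi.not_ge ((ENNReal.ofReal_le_iff_le_toReal hne).mp (hI i))

theorem pow_mul_le_of_forall_mul_le_add {g : ℝ → ℝ} {ρ d X : ℝ} (hρ : 0 ≤ ρ) (hd : 0 ≤ d)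
    (hg : ∀ x ≥ X, ρ * g x ≤ g (x + d)) (n : ℕ) : ρ ^ n * g X ≤ g (X + n * d) := by
  induction n with
  | zero => simp
  | succ n ih =>
    calc ρ ^ (n + 1) * g X = ρ * (ρ ^ n * g X) := by ring
      _ ≤ ρ * g (X + n * d) := mul_le_mul_of_nonneg_left ih hρ
      _ ≤ g (X + n * d + d) := hg _ (le_add_of_nonneg_right (by positivity))
      _ = g (X + (n + 1 : ℕ) * d) := by push_cast; ring_nf

theorem MemLdelta.eventually_mul_le_locMass_add {F : Measure ℝ} {d ρ : ℝ} (hL : MemLdelta F d)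
    (hd : 0 < d) (hρ : ρ < 1) : ∀ᶠ x in atTop, ρ * locMass F d x ≤ locMass F d (x + d) := by
  filter_upwards [hL.1, hL.2 d hd (1 - ρ) (by linarith)] with x hpos hratio
  have hρ_le : ρ ≤ locMass F d (x + d) / locMass F d x := by
    linarith [(abs_le.mp (hratio d (abs_of_pos hd).le)).1]
  rwa [le_div_iff₀ hpos] at hρ_le

theorem ofReal_exp_mul_locMass_le_setLIntegral (F : Measure ℝ) (d : ℝ) {ε a : ℝ} (hε : 0 ≤ ε)
    (ha : 0 ≤ a) : ENNReal.ofReal (exp (ε * a) * locMass F d a) ≤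
      ∫⁻ y in Ici 0, ENNReal.ofReal (exp (ε * y)) ∂F :=
  calc ENNReal.ofReal (exp (ε * a) * locMass F d a)
      ≤ ENNReal.ofReal (exp (ε * a)) * F (Ioc a (a + d)) := by
        rw [ENNReal.ofReal_mul (exp_pos _).le]
        exact mul_le_mul_right ENNReal.ofReal_toReal_le _
    _ = ∫⁻ _ in Ioc a (a + d), ENNReal.ofReal (exp (ε * a)) ∂F := (setLIntegral_const _ _).symm
    _ ≤ ∫⁻ y in Ioc a (a + d), ENNReal.ofReal (exp (ε * y)) ∂F :=
        setLIntegral_mono (by fun_prop) fun y hy => by gcongr; exact hy.1.le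
    _ ≤ ∫⁻ y in Ici 0, ENNReal.ofReal (exp (ε * y)) ∂F :=
        lintegral_mono_set fun y hy => ha.trans hy.1.le

theorem heavy_tailed_of_mem_Ldelta (F : Measure ℝ)
    (d : ℝ) (hd : 0 < d) (hL : MemLdelta F d) :
    ∀ ε > (0:ℝ),
      ∫⁻ y in Set.Ici (0:ℝ), ENNReal.ofReal (Real.exp (ε * y)) ∂F = ⊤ := by
  intro ε hε
  set ρ := exp (-(ε * d / 2))
  have hρ : ρ < 1 := exp_lt_one_iff.mpr (by nlinarith)
  obtain ⟨X, hX⟩ := eventually_atTop.mp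
    (hL.1.and ((hL.eventually_mul_le_locMass_add hd hρ).and (eventually_ge_atTop 0)))
  obtain ⟨hc, -, hX0⟩ := hX X le_rfl
  have hgeom := pow_mul_le_of_forall_mul_le_add (exp_pos _).le hd.le fun x hx => (hX x hx).2.1
  have hrate (n : ℕ) : exp (ε * (X + n * d)) * ρ ^ n = exp (ε * X) * exp (ε * d / 2) ^ n := by
    rw [← exp_nat_mul, ← exp_nat_mul, ← exp_add, ← exp_add]; ring_nf
  refine ENNReal.eq_top_of_tendsto_atTop_of_forall_ofReal_le (l := atTop)
    (u := fun n : ℕ => locMass F d X * exp (ε * X) * exp (ε * d / 2) ^ n) ?_ fun n => ?_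
  · exact (tendsto_pow_atTop_atTop_of_one_lt (one_lt_exp_iff.mpr (by positivity))).const_mul_atTop
      (by positivity)
  · calc ENNReal.ofReal (locMass F d X * exp (ε * X) * exp (ε * d / 2) ^ n)
        = ENNReal.ofReal (exp (ε * (X + n * d)) * (ρ ^ n * locMass F d X)) := by
          rw [← mul_assoc, hrate]; ring_nf
      _ ≤ ENNReal.ofReal (exp (ε * (X + n * d)) * locMass F d (X + n * d)) := by
          gcongr; exact hgeom n
      _ ≤ _ := ofReal_exp_mul_locMass_le_setLIntegral F d hε.le (by positivity)
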